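/- arXiv:0804.1254 — 2 statements merged into one kernel-verified Lean document; each statement's English description precedes it below -/
import Mathlib

section
/- If u is an associative Lyndon-Shirshov word containing an ALSW subword v, say u = avb, then the standard bracketing of u satisfies [u] = [a[vc]d] for some factorization b = cd; that is, there is an occurrence of a bracketed subword [vc] in [u] whose underlying word starts with v. -/
open List

/-- The lexicographic order used by Shirshov: a word is *greater* than any of its
proper extensions (`w > w ++ t` for `t ≠ []`), and otherwise words are compared
letterwise by the order on the alphabet.  `LSLt u v` means `u < v`. -/
def LSLt {X : Type*} [LinearOrder X] : List X → List X → Prop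
  | _ :: _, [] => True
  | [], _ => False
  | a :: u, b :: v => a < b ∨ (a = b ∧ LSLt u v)

/-- `u ≤ v` in the Shirshov lexicographic order. -/
def LSLe {X : Type*} [LinearOrder X] (u v : List X) : Prop := u = v ∨ LSLt u v

/-- The degree-lexicographic order: compare first by length, then lexicographically. -/
def DegLt {X : Type*} [LinearOrder X] (u v : List X) : Prop :=
  u.length < v.length ∨ (u.length = v.length ∧ LSLt u v)

/-- `≤` in the degree-lexicographic order. -/
def DegLe {X : Type*} [LinearOrder X] (u v : List X) : Prop := u = v ∨ DegLt u v

/-- An associative Lyndon–Shirshov word: a nonempty word `u` such that `vw > wv`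
(lexicographically) for every factorization `u = vw` into nonempty parts. -/
def IsALSW {X : Type*} [LinearOrder X] (u : List X) : Prop :=
  u ≠ [] ∧ ∀ v w : List X, v ≠ [] → w ≠ [] → u = v ++ w → LSLt (w ++ v) (v ++ w)

/-- The underlying associative word of a non-associative word (binary bracketing). -/
def wordOf {X : Type*} : FreeMagma X → List X
  | .of x => [x]
  | .mul a b => wordOf a ++ wordOf b

/-- `w` is the longest proper suffix of `u` which is an ALSW. -/
def LongestALSWProperSuffix {X : Type*} [LinearOrder X] (u w : List X) : Prop :=
  IsALSW w ∧ (∃ v : List X, v ≠ [] ∧ u = v ++ w) ∧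
    ∀ w' : List X, IsALSW w' → (∃ v' : List X, v' ≠ [] ∧ u = v' ++ w') →
      w'.length ≤ w.length

/-- The standard (up-to-down) bracketing of an ALSW: `[x] = x` and
`[u] = [[v][w]]` where `w` is the longest proper ALSW suffix of `u`. -/
inductive IsStdBracketing {X : Type*} [LinearOrder X] : List X → FreeMagma X → Prop
  | of (x : X) : IsStdBracketing [x] (.of x)
  | mul {v w : List X} {tv tw : FreeMagma X} :
      IsALSW (v ++ w) → LongestALSWProperSuffix (v ++ w) w →
      IsStdBracketing v tv → IsStdBracketing w tw →
      IsStdBracketing (v ++ w) (tv * tw)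

/-- A non-associative Lyndon–Shirshov word, via Shirshov's conditions:
the underlying word is an ALSW, both halves are NLSWs, and the right factor of
the left half is `≤` the right half. -/
inductive IsNLSW {X : Type*} [LinearOrder X] : FreeMagma X → Prop
  | of (x : X) : IsNLSW (.of x)
  | mul {tv tw : FreeMagma X} :
      IsNLSW tv → IsNLSW tw → IsALSW (wordOf (tv * tw)) →
      (∀ t₁ t₂ : FreeMagma X, tv = t₁ * t₂ → LSLe (wordOf t₂) (wordOf tw)) →
      IsNLSW (tv * tw)

/-- The free associative algebra `k⟨X⟩`, realized as the monoid algebra of the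
free monoid on `X`. -/
abbrev FreeAssocAlg (k X : Type*) [Field k] := MonoidAlgebra k (FreeMonoid X)

/-- The monomial of `k⟨X⟩` corresponding to a word `u ∈ X*`. -/
noncomputable def monom (k : Type*) [Field k] {X : Type*} (u : List X) : FreeAssocAlg k X :=
  MonoidAlgebra.single (FreeMonoid.ofList u) 1

/-- The coefficient of the word `u` in `f ∈ k⟨X⟩`. -/
def coeffW {k X : Type*} [Field k] (f : FreeAssocAlg k X) (u : List X) : k :=
  f.coeff (FreeMonoid.ofList u)

/-- `u` is the leading word of `f` with respect to the deg-lex order. -/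
def IsLeadingWord {k X : Type*} [Field k] [LinearOrder X]
    (f : FreeAssocAlg k X) (u : List X) : Prop :=
  coeffW f u ≠ 0 ∧ ∀ w : List X, coeffW f w ≠ 0 → w = u ∨ DegLt w u

/-- `f` is monic: its leading coefficient is `1`. -/
def IsMonic {k X : Type*} [Field k] [LinearOrder X] (f : FreeAssocAlg k X) : Prop :=
  ∃ u : List X, IsLeadingWord f u ∧ coeffW f u = 1

/-- The generator `x ∈ X` inside `k⟨X⟩`. -/
noncomputable def gen (k : Type*) [Field k] {X : Type*} (x : X) : FreeAssocAlg k X :=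
  monom k [x]

attribute [local instance 100] LieRing.ofAssociativeRing
attribute [local instance 100] LieAlgebra.ofAssociativeAlgebra

/-- The free Lie algebra `Lie(X)`: the Lie subalgebra of `k⟨X⟩` generated by `X`
under the commutator bracket. -/
noncomputable def LieX (k X : Type*) [Field k] : LieSubalgebra k (FreeAssocAlg k X) :=
  LieSubalgebra.lieSpan k _ (Set.range (gen k (X := X)))

/-- Evaluation of a non-associative word in `k⟨X⟩`, interpreting the binary
operation as the commutator `(ab) = ab - ba`. -/
noncomputable def evalC {k X : Type*} [Field k] : FreeMagma X → FreeAssocAlg k X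
  | .of x => gen k x
  | .mul a b => evalC a * evalC b - evalC b * evalC a

/-- `SubtreeAt s a d t`: `s` occurs as a (bracketed) subtree of `t`, with the word
`a` to its left and the word `d` to its right. -/
inductive SubtreeAt {X : Type*} : FreeMagma X → List X → List X → FreeMagma X → Prop
  | refl (t : FreeMagma X) : SubtreeAt t [] [] t
  | left {s : FreeMagma X} {a d : List X} {t₁ : FreeMagma X} (t₂ : FreeMagma X) :
      SubtreeAt s a d t₁ → SubtreeAt s a (d ++ wordOf t₂) (t₁ * t₂)
  | right {s : FreeMagma X} {a d : List X} {t₂ : FreeMagma X} (t₁ : FreeMagma X) :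
      SubtreeAt s a d t₂ → SubtreeAt s (wordOf t₁ ++ a) d (t₁ * t₂)

/-- `ReplaceAt s s' a d t t'`: `t'` is obtained from `t` by replacing the subtree
`s`, occurring at position `(a, d)`, by `s'`. -/
inductive ReplaceAt {X : Type*} (s s' : FreeMagma X) :
    List X → List X → FreeMagma X → FreeMagma X → Prop
  | refl : ReplaceAt s s' [] [] s s'
  | left {a d : List X} {t₁ t₁' : FreeMagma X} (t₂ : FreeMagma X) :
      ReplaceAt s s' a d t₁ t₁' → ReplaceAt s s' a (d ++ wordOf t₂) (t₁ * t₂) (t₁' * t₂)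
  | right {a d : List X} {t₂ t₂' : FreeMagma X} (t₁ : FreeMagma X) :
      ReplaceAt s s' a d t₂ t₂' →
      ReplaceAt s s' (wordOf t₁ ++ a) d (t₁ * t₂) (t₁ * t₂')

/-- The left-normed product `[[[t₀ t₁] t₂] ⋯ tₙ]`. -/
def leftComb {X : Type*} (t₀ : FreeMagma X) (ts : List (FreeMagma X)) : FreeMagma X :=
  ts.foldl (· * ·) t₀

/-- `cs` is the non-decreasing Lyndon factorization of `c`. -/
def LyndonFactorization {X : Type*} [LinearOrder X] (c : List X) (cs : List (List X)) : Prop :=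
  c = cs.flatten ∧ (∀ w ∈ cs, IsALSW w) ∧ cs.Chain' LSLe

/-- `EvalSub k f s a d t h`: evaluating the bracketing `t` in `k⟨X⟩` (via
commutators), except that its subtree `s` at position `(a, d)` is replaced by the
polynomial `f`, gives the value `h`. -/
inductive EvalSub (k : Type*) [Field k] {X : Type*} [LinearOrder X] (f : FreeAssocAlg k X) :
    FreeMagma X → List X → List X → FreeMagma X → FreeAssocAlg k X → Prop
  | refl (s : FreeMagma X) : EvalSub k f s [] [] s f
  | left {s : FreeMagma X} {a d : List X} {t₁ : FreeMagma X} {h : FreeAssocAlg k X}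
      (t₂ : FreeMagma X) : EvalSub k f s a d t₁ h →
      EvalSub k f s a (d ++ wordOf t₂) (t₁ * t₂) (h * evalC t₂ - evalC t₂ * h)
  | right {s : FreeMagma X} {a d : List X} {t₂ : FreeMagma X} {h : FreeAssocAlg k X}
      (t₁ : FreeMagma X) : EvalSub k f s a d t₂ h →
      EvalSub k f s (wordOf t₁ ++ a) d (t₁ * t₂) (evalC t₁ * h - h * evalC t₁)

/-- `IsNormalSWord f fbar a b h`: `h` is the normal `S`-word `[afb]_{f̄}`, i.e. the
result of taking the relative (Shirshov special) bracketing `[a f̄ b]_{f̄}` and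
substituting the polynomial `f` for the subtree `[f̄]`. -/
def IsNormalSWord {k X : Type*} [Field k] [LinearOrder X]
    (f : FreeAssocAlg k X) (fbar a b : List X) (h : FreeAssocAlg k X) : Prop :=
  ∃ (c d : List X) (t s tv t' : FreeMagma X) (cs : List (List X)) (tcs : List (FreeMagma X)),
    b = c ++ d ∧
    IsStdBracketing (a ++ fbar ++ b) t ∧
    SubtreeAt s a d t ∧ wordOf s = fbar ++ c ∧
    IsStdBracketing fbar tv ∧
    LyndonFactorization c cs ∧
    List.Forall₂ IsStdBracketing cs tcs ∧
    ReplaceAt s (leftComb tv tcs) a d t t' ∧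
    EvalSub k f tv a (c ++ d) t' h

/-! The standard factor `w` of `u = v₁w` is the lexicographically greatest proper suffix of `u`.
An ALSW `v = v'v''` occurring in `u` with `v'` a proper suffix of `v₁` and `v''` a proper
prefix of `w` would give `w = v''b < v'v''b`, exhibiting a greater proper suffix. So every
occurrence of `v` after a nonempty prefix lies inside `v₁` or inside `w`, and induction on the
bracketing finds the subtree `[vc]`. -/

section

open OrderDual

variable {X : Type*} [LinearOrder X]

theorem lslt_iff_lt_dual {u v : List X} : LSLt u v ↔ v.map toDual < u.map toDual := by
  induction u generalizing v with
  | nil => cases v <;> simp [LSLt]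
  | cons a u ih =>
    cases v with
    | nil => exact iff_of_true trivial List.Lex.nil
    | cons b v =>
      rw [LSLt, List.map_cons, List.map_cons, List.cons_lt_cons_iff, ← ih, toDual_lt_toDual,
        toDual_inj, @eq_comm _ b]

theorem lsle_iff_le_dual {u v : List X} : LSLe u v ↔ v.map toDual ≤ u.map toDual := by
  rw [LSLe, lslt_iff_lt_dual, le_iff_lt_or_eq,
    (List.map_injective_iff.2 toDual.injective).eq_iff, eq_comm, or_comm]

theorem lslt_irrefl (u : List X) : ¬ LSLt u u := by
  rw [lslt_iff_lt_dual]
  exact lt_irrefl _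

theorem lslt_asymm {u v : List X} (h : LSLt u v) : ¬ LSLt v u := by
  rw [lslt_iff_lt_dual] at *
  exact h.asymm

theorem not_lslt_of_lsle {u v : List X} (h : LSLe u v) : ¬ LSLt v u := by
  rw [lsle_iff_le_dual] at h
  rw [lslt_iff_lt_dual]
  exact h.not_gt

theorem lslt_trichotomy (u v : List X) : LSLt u v ∨ u = v ∨ LSLt v u := by
  rcases lt_trichotomy (u.map toDual) (v.map toDual) with h | h | h
  · exact Or.inr (Or.inr (lslt_iff_lt_dual.2 h))
  · exact Or.inr (Or.inl (List.map_injective_iff.2 toDual.injective h))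
  · exact Or.inl (lslt_iff_lt_dual.2 h)

theorem lslt_of_append_lslt_append_left {q p r : List X} (h : LSLt (q ++ p) (q ++ r)) :
    LSLt p r := by
  rw [lslt_iff_lt_dual, List.map_append, List.map_append] at h
  rw [lslt_iff_lt_dual]
  by_contra hpr
  rcases (not_lt.1 hpr).lt_or_eq with hpr | hpr
  · exact h.asymm (List.append_left_lt hpr)
  · exact lt_irrefl _ (hpr ▸ h)

theorem lslt_append_of_not_prefix {x y : List X} (h : LSLt x y) (hyx : ¬ y <+: x)
    (s t : List X) : LSLt (x ++ s) (y ++ t) := by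
  induction x generalizing y with
  | nil => simp [LSLt] at h
  | cons a x ih =>
    cases y with
    | nil => exact absurd (List.nil_prefix) hyx
    | cons b y =>
      rcases h with hab | ⟨rfl, h⟩
      · exact Or.inl hab
      · exact Or.inr ⟨rfl, ih h (fun hyx' => hyx (List.cons_prefix_cons.2 ⟨rfl, hyx'⟩))⟩

theorem lslt_append_of_length_le {x y : List X} (h : LSLt x y) (hlen : x.length ≤ y.length)
    (s t : List X) : LSLt (x ++ s) (y ++ t) :=
  lslt_append_of_not_prefix h
    (fun hyx => lslt_irrefl x (hyx.eq_of_length (le_antisymm hyx.length_le hlen) ▸ h)) s t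

theorem IsALSW.lslt_of_append {p q : List X} (h : IsALSW (p ++ q)) (hp : p ≠ []) (hq : q ≠ []) :
    LSLt q (p ++ q) := by
  have hqp : LSLt (q ++ p) (p ++ q) := h.2 p q hp hq rfl
  have hlen : q.length < (p ++ q).length := by
    simpa using List.length_pos_iff.2 hp
  rcases lslt_trichotomy q (p ++ q) with hlt | heq | hgt
  · exact hlt
  · exact absurd (congrArg List.length heq) hlen.ne
  by_cases hpre : q <+: p ++ q
  -- `pq = qt`: the factorizations `p·q` and `q·t` give `p < t` and `tq < pq`, while `|t| = |p|`.
  · obtain ⟨t, ht⟩ := hpre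
    have htne : t ≠ [] := by
      rintro rfl
      exact hlen.ne (by rw [← ht, List.append_nil])
    have htp : t.length = p.length := by
      have := congrArg List.length ht
      simp only [List.length_append] at this
      omega
    have hpt : LSLt p t := lslt_of_append_lslt_append_left (ht ▸ hqp)
    have htq : LSLt (t ++ q) (q ++ t) := h.2 q t hq htne ht.symm
    rw [ht] at htq
    exact absurd htq (lslt_asymm (lslt_append_of_length_le hpt htp.ge q q))
  · have := lslt_append_of_not_prefix hgt hpre [] p
    rw [List.append_nil] at this
    exact absurd hqp (lslt_asymm this)

theorem exists_greatest_suffix {l : List X} (hl : l ≠ []) :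
    ∃ m, m ≠ [] ∧ m <:+ l ∧ ∀ s, s ≠ [] → s <:+ l → LSLe s m := by
  classical
  obtain ⟨m, hm, hmin⟩ := (l.tails.toFinset.filter (· ≠ [])).exists_min_image
    (fun s : List X => s.map toDual) ⟨l, by simp [hl]⟩
  simp only [Finset.mem_filter, List.mem_toFinset, List.mem_tails] at hm hmin
  exact ⟨m, hm.2, hm.1, fun s hs hsl => lsle_iff_le_dual.2 (hmin s ⟨hsl, hs⟩)⟩

theorem isALSW_of_greatest_suffix {l m : List X} (hm : m ≠ []) (hml : m <:+ l)
    (hmax : ∀ s, s ≠ [] → s <:+ l → LSLe s m) : IsALSW m := by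
  refine ⟨hm, fun p q hp hq hpq => ?_⟩
  have hq : LSLt q m := by
    have hlen : q.length < m.length := by
      simpa [hpq] using List.length_pos_iff.2 hp
    rcases hmax q hq ((hpq ▸ List.suffix_append p q).trans hml) with rfl | hlt
    · exact absurd hlen (lt_irrefl _)
    · exact hlt
  have := lslt_append_of_length_le hq (by simp [hpq]) p []
  rwa [List.append_nil, hpq] at this

namespace LongestALSWProperSuffix

theorem lsle_of_proper_suffix {u w p s : List X} (hL : LongestALSWProperSuffix u w)
    (hp : p ≠ []) (hs : s ≠ []) (hu : u = p ++ s) : LSLe s w := by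
  obtain ⟨hw, ⟨q, hq, rfl⟩, hlong⟩ := hL
  obtain ⟨x, q, rfl⟩ := List.exists_cons_of_ne_nil hq
  obtain ⟨y, p, rfl⟩ := List.exists_cons_of_ne_nil hp
  obtain ⟨-, hqp⟩ : x = y ∧ q ++ w = p ++ s := by simpa using hu
  -- The greatest proper suffix `m` is an ALSW, so it is no longer than `w`; it cannot be a
  -- proper suffix of `w` either, as `w` exceeds those.
  obtain ⟨m, hm, ⟨r, hr⟩, hmax⟩ := exists_greatest_suffix (l := q ++ w) (by simp [hw.1])
  have hmALSW : IsALSW m := isALSW_of_greatest_suffix hm ⟨r, hr⟩ hmax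
  have hmw : m <:+ w := List.suffix_of_suffix_length_le ⟨r, hr⟩ (List.suffix_append q w)
    (hlong m hmALSW ⟨x :: r, by simp, by simp [← hr]⟩)
  have hwm : m = w := by
    obtain ⟨r', rfl⟩ := hmw
    rcases eq_or_ne r' [] with rfl | hr'
    · rfl
    · exact absurd (hw.lslt_of_append hr' hm)
        (not_lslt_of_lsle (hmax _ hw.1 (List.suffix_append q _)))
  exact hwm ▸ hmax s hs (hqp ▸ List.suffix_append p s)

theorem not_isALSW_of_straddle {a v' v'' b : List X}
    (hL : LongestALSWProperSuffix (a ++ v' ++ (v'' ++ b)) (v'' ++ b))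
    (ha : a ≠ []) (hv' : v' ≠ []) (hv'' : v'' ≠ []) : ¬ IsALSW (v' ++ v'') := by
  intro hv
  have hlen : v''.length ≤ (v' ++ v'').length := by simp
  have hlt : LSLt (v'' ++ b) (v' ++ (v'' ++ b)) := by
    simpa using lslt_append_of_length_le (hv.lslt_of_append hv' hv'') hlen b b
  exact not_lslt_of_lsle (hL.lsle_of_proper_suffix ha (by simp [hv']) (List.append_assoc ..)) hlt

theorem subword_within_factor {v₁ w a v b : List X} (hL : LongestALSWProperSuffix (v₁ ++ w) w)
    (hv : IsALSW v) (ha : a ≠ []) (h : v₁ ++ w = a ++ v ++ b) :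
    (∃ x, v₁ = a ++ v ++ x ∧ b = x ++ w) ∨ (∃ y, a = v₁ ++ y ∧ w = y ++ v ++ b) := by
  rw [List.append_assoc] at h
  rcases List.append_eq_append_iff.1 h with ⟨y, rfl, rfl⟩ | ⟨v', rfl, hvb⟩
  · exact Or.inr ⟨y, rfl, by simp⟩
  rcases List.append_eq_append_iff.1 hvb with ⟨x, rfl, rfl⟩ | ⟨v'', rfl, rfl⟩
  · exact Or.inl ⟨x, by simp, rfl⟩
  rcases eq_or_ne v' [] with rfl | hv'
  · exact Or.inr ⟨[], by simp, by simp⟩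
  rcases eq_or_ne v'' [] with rfl | hv''
  · exact Or.inl ⟨[], by simp, by simp⟩
  exact absurd hv (not_isALSW_of_straddle (by simpa using hL) ha hv' hv'')

end LongestALSWProperSuffix

theorem IsStdBracketing.wordOf_eq {u : List X} {t : FreeMagma X} (h : IsStdBracketing u t) :
    wordOf t = u := by
  induction h with
  | of x => rfl
  | mul _ _ _ _ ih₁ ih₂ => exact congrArg₂ (· ++ ·) ih₁ ih₂

theorem IsStdBracketing.exists_subtreeAt {u : List X} {t : FreeMagma X}
    (ht : IsStdBracketing u t) {a v b : List X} (hv : IsALSW v) (h : u = a ++ v ++ b) :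
    ∃ c d s, b = c ++ d ∧ SubtreeAt s a d t ∧ wordOf s = v ++ c := by
  induction ht generalizing a b with
  | of x =>
    obtain ⟨rfl, rfl⟩ : a = [] ∧ b = [] := by
      have hlen := congrArg List.length h
      have := List.length_pos_iff.2 hv.1
      simp only [List.length_append, List.length_singleton] at hlen
      exact ⟨List.eq_nil_of_length_eq_zero (by omega), List.eq_nil_of_length_eq_zero (by omega)⟩
    rw [List.nil_append, List.append_nil] at h
    exact ⟨[], [], .of x, rfl, .refl _, by rw [← h]; rfl⟩
  | @mul v₁ w tv₁ tw _ hL hv₁ hw ih₁ ih₂ =>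
    rcases eq_or_ne a [] with rfl | ha
    · exact ⟨b, [], tv₁ * tw, (List.append_nil b).symm, .refl _, by
        simp [wordOf, IsStdBracketing.wordOf_eq hv₁, IsStdBracketing.wordOf_eq hw, h]⟩
    rcases hL.subword_within_factor hv ha h with ⟨x, rfl, rfl⟩ | ⟨y, rfl, rfl⟩
    · obtain ⟨c, d, s, rfl, hs, hws⟩ := ih₁ rfl
      refine ⟨c, d ++ w, s, by simp, ?_, hws⟩
      simpa [IsStdBracketing.wordOf_eq hw] using hs.left tw
    · obtain ⟨c, d, s, rfl, hs, hws⟩ := ih₂ rfl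
      refine ⟨c, d, s, rfl, ?_, hws⟩
      simpa [IsStdBracketing.wordOf_eq hv₁] using hs.right tv₁

end

theorem shirshov_special_bracketing_i_general {X : Type*} [LinearOrder X]
    (a v b : List X) (hv : IsALSW v)
    (t : FreeMagma X) (ht : IsStdBracketing (a ++ v ++ b) t) :
    ∃ (c d : List X) (s : FreeMagma X),
      b = c ++ d ∧ SubtreeAt s a d t ∧ wordOf s = v ++ c :=
  IsStdBracketing.exists_subtreeAt ht hv rfl

/-- Shirshov's special bracketing lemma, part (i).
If `u = avb` is an ALSW containing an ALSW subword `v`, then the standard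
bracketing of `u` satisfies `[u] = [a[vc]d]` for some factorization `b = cd`:
there is a bracketed subtree of `[u]` whose underlying word is `vc`, occurring
immediately after the prefix `a`. -/
theorem shirshov_special_bracketing_i {k X : Type*} [Field k] [LinearOrder X]
    (a v b : List X) (hu : IsALSW (a ++ v ++ b)) (hv : IsALSW v)
    (t : FreeMagma X) (ht : IsStdBracketing (a ++ v ++ b) t) :
    ∃ (c d : List X) (s : FreeMagma X),
      b = c ++ d ∧ SubtreeAt s a d t ∧ wordOf s = v ++ c :=
  shirshov_special_bracketing_i_general a v b hv t ht
end

section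
/- For a nonempty set S of monic polynomials in k⟨X⟩ and a monomial well-order on X*, S is a Gröbner-Shirshov basis if and only if every nonzero f in the two-sided ideal Id(S) has leading word of the form a s̄ b for some s ∈ S and a, b ∈ X*; and either condition is equivalent to the set of S-irreducible words {u ∈ X* : u ≠ a s̄ b for all s ∈ S, a,b ∈ X*} being a k-basis of k⟨X⟩/Id(S). -/
open List

attribute [local instance 100] LieRing.ofAssociativeRing

/-- `u` is the leading word of `f` with respect to the order `r`. -/
def IsLeadingWordR {k X : Type*} [Field k] (r : List X → List X → Prop)
    (f : FreeAssocAlg k X) (u : List X) : Prop :=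
  coeffW f u ≠ 0 ∧ ∀ w : List X, coeffW f w ≠ 0 → w = u ∨ r w u

/-- The shape of a composition: inclusion or intersection, with context words. -/
inductive CompShape (X : Type*)
  | incl (a b : List X)
  | inter (a b : List X)

/-- The associative composition `(f,g)_w` of two polynomials with leading words
`fbar`, `gbar`. -/
def IsAssComp {k X : Type*} [Field k] (f g : FreeAssocAlg k X) (fbar gbar w : List X) :
    CompShape X → FreeAssocAlg k X → Prop
  | CompShape.incl a b, p =>
      w = fbar ∧ w = a ++ gbar ++ b ∧ p = f - monom k a * g * monom k b
  | CompShape.inter a b, p =>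
      w = fbar ++ b ∧ w = a ++ gbar ∧ w.length < fbar.length + gbar.length ∧
      p = f * monom k b - monom k a * g

/-- `p` is trivial modulo `(S, w)` with respect to the order `r`. -/
def TrivialModAssR {k X : Type*} [Field k] (r : List X → List X → Prop)
    (S : Set (FreeAssocAlg k X)) (w : List X) (p : FreeAssocAlg k X) : Prop :=
  ∃ (n : ℕ) (α : Fin n → k) (s : Fin n → FreeAssocAlg k X) (a b sb : Fin n → List X),
    (∀ i, s i ∈ S ∧ IsLeadingWordR r (s i) (sb i) ∧ r (a i ++ sb i ++ b i) w) ∧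
    p = ∑ i, α i • (monom k (a i) * s i * monom k (b i))

/-- `S` is a Gröbner–Shirshov basis in `k⟨X⟩` with respect to the order `r`. -/
def IsGSBAssR {k X : Type*} [Field k] (r : List X → List X → Prop)
    (S : Set (FreeAssocAlg k X)) : Prop :=
  ∀ (f g : FreeAssocAlg k X) (fbar gbar w : List X) (sh : CompShape X)
    (p : FreeAssocAlg k X), f ∈ S → g ∈ S →
    IsLeadingWordR r f fbar → IsLeadingWordR r g gbar →
    IsAssComp f g fbar gbar w sh p → TrivialModAssR r S w p

/-!
Write `Id(S)` as the `k`-span of the sandwiches `a s b` with `s ∈ S`. If all compositions are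
trivial, two sandwiches with the same word `a s̄ b` differ by a combination of sandwiches with
smaller words: for disjoint occurrences of the leading words this holds for any monic `S`, and
otherwise the difference is `a (f,g)_w b` for a composition `(f,g)_w`. Hence in a representation
of `f ∈ Id(S)` by sandwiches whose largest word `w` is minimal, the terms with word `w` merge into
a single one that cannot cancel, and `w` is the leading word of `f`.

Reduction modulo `S` shows that the irreducible words span `k⟨X⟩` modulo `Id(S)`, so they form
a basis exactly when `Id(S)` meets their span trivially, as the leading-word condition ensures.
Conversely, given that, a composition `p` with words below `w` reduces to an irreducible
remainder lying in `Id(S)`, which therefore vanishes; so `p` is trivial modulo `(S, w)`.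
-/

namespace CompositionDiamond

variable {k X : Type*} [Field k] {r : List X → List X → Prop} {S : Set (FreeAssocAlg k X)}

def RLe (r : List X → List X → Prop) (u v : List X) : Prop := u = v ∨ r u v

theorem RLe.trans (htrans : ∀ ⦃u v w : List X⦄, r u v → r v w → r u w) {u v w : List X}
    (h₁ : RLe r u v) (h₂ : RLe r v w) : RLe r u w := by
  rcases h₁ with rfl | h₁
  · exact h₂
  · rcases h₂ with rfl | h₂
    exacts [Or.inr h₁, Or.inr (htrans h₁ h₂)]

theorem RLe.trans_lt (htrans : ∀ ⦃u v w : List X⦄, r u v → r v w → r u w) {u v w : List X}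
    (h₁ : RLe r u v) (h₂ : r v w) : r u w := by
  rcases h₁ with rfl | h₁
  exacts [h₂, htrans h₁ h₂]

theorem lt_of_lt_of_rle (htrans : ∀ ⦃u v w : List X⦄, r u v → r v w → r u w) {u v w : List X}
    (h₁ : r u v) (h₂ : RLe r v w) : r u w := by
  rcases h₂ with rfl | h₂
  exacts [h₁, htrans h₁ h₂]

theorem exists_maximum (htrans : ∀ ⦃u v w : List X⦄, r u v → r v w → r u w)
    (htri : ∀ u v : List X, r u v ∨ u = v ∨ r v u)
    {t : Finset (List X)} (ht : t.Nonempty) : ∃ u ∈ t, ∀ v ∈ t, RLe r v u := by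
  induction ht using Finset.Nonempty.cons_induction with
  | singleton a =>
    exact ⟨a, Finset.mem_singleton_self a, fun v hv => Or.inl (Finset.mem_singleton.1 hv)⟩
  | cons a t ha _ ih =>
    obtain ⟨u, hu, hmax⟩ := ih
    rcases htri a u with h | rfl | h
    · refine ⟨u, Finset.mem_cons_of_mem hu, fun v hv => ?_⟩
      rcases Finset.mem_cons.1 hv with rfl | hv
      exacts [Or.inr h, hmax v hv]
    · exact ⟨a, Finset.mem_cons_self a t, fun v hv => (Finset.mem_cons.1 hv).elim Or.inl (hmax v)⟩
    · refine ⟨a, Finset.mem_cons_self a t, fun v hv => ?_⟩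
      rcases Finset.mem_cons.1 hv with rfl | hv
      exacts [Or.inl rfl, (hmax v hv).trans htrans (Or.inr h)]

structure IsMonomialOrder (r : List X → List X → Prop) : Prop where
  wf : WellFounded r
  trans : ∀ ⦃u v w : List X⦄, r u v → r v w → r u w
  trichotomous : ∀ u v : List X, r u v ∨ u = v ∨ r v u
  append_mono : ∀ u v a b : List X, r u v → r (a ++ u ++ b) (a ++ v ++ b)

theorem coeffW_sub (f g : FreeAssocAlg k X) (u : List X) :
    coeffW (f - g) u = coeffW f u - coeffW g u :=
  Finsupp.sub_apply f.coeff g.coeff _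

theorem coeffW_add (f g : FreeAssocAlg k X) (u : List X) :
    coeffW (f + g) u = coeffW f u + coeffW g u := rfl

theorem coeffW_smul (c : k) (f : FreeAssocAlg k X) (u : List X) :
    coeffW (c • f) u = c * coeffW f u := rfl

theorem coeffW_monom_self (u : List X) : coeffW (monom k u) u = 1 := by
  simp [coeffW, monom]

theorem coeffW_monom_of_ne {u v : List X} (h : u ≠ v) : coeffW (monom k u) v = 0 := by
  simp [coeffW, monom, h]

theorem monom_mul_monom (a b : List X) : monom k a * monom k b = monom k (a ++ b) := by
  simp [monom, MonoidAlgebra.single_mul_single, FreeMonoid.ofList_append]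

theorem monom_nil : monom k ([] : List X) = 1 := rfl

theorem coeffW_monom_mul (a : List X) (f : FreeAssocAlg k X) (u : List X) :
    coeffW (monom k a * f) (a ++ u) = coeffW f u := by
  simp [coeffW, monom]

theorem coeffW_mul_monom (b : List X) (f : FreeAssocAlg k X) (u : List X) :
    coeffW (f * monom k b) (u ++ b) = coeffW f u := by
  simp [coeffW, monom]

theorem coeffW_sandwich (a b : List X) (f : FreeAssocAlg k X) (u : List X) :
    coeffW (monom k a * f * monom k b) (a ++ u ++ b) = coeffW f u := by
  rw [mul_assoc, List.append_assoc, coeffW_monom_mul, coeffW_mul_monom]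

theorem exists_of_coeffW_sandwich_ne_zero {a b v : List X} {f : FreeAssocAlg k X}
    (h : coeffW (monom k a * f * monom k b) v ≠ 0) : ∃ u, v = a ++ u ++ b ∧ coeffW f u ≠ 0 := by
  rw [mul_assoc] at h
  obtain ⟨t, rfl⟩ : ∃ t, v = a ++ t := by
    by_contra! hv
    exact h (MonoidAlgebra.coeff_single_mul_of_forall_mul_ne _ _ fun d hd => hv d.toList hd.symm)
  rw [coeffW_monom_mul] at h
  obtain ⟨u, rfl⟩ : ∃ u, t = u ++ b := by
    by_contra! ht
    exact h (MonoidAlgebra.coeff_mul_single_of_forall_mul_ne _ _ fun d hd => ht d.toList hd.symm)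
  rw [coeffW_mul_monom] at h
  exact ⟨u, (List.append_assoc _ _ _).symm, h⟩

noncomputable def wordsIn (k : Type*) [Field k] (P : List X → Prop) :
    Submodule k (FreeAssocAlg k X) :=
  MonoidAlgebra.supported k k {m | P (FreeMonoid.toList m)}

theorem mem_wordsIn {P : List X → Prop} {f : FreeAssocAlg k X} :
    f ∈ wordsIn k P ↔ ∀ u, coeffW f u ≠ 0 → P u := by
  rw [wordsIn, MonoidAlgebra.mem_supported']
  exact ⟨fun h u => not_imp_comm.1 (h (FreeMonoid.ofList u)),
    fun h m => not_imp_comm.1 (h m.toList)⟩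

theorem wordsIn_eq_span (P : List X → Prop) :
    wordsIn k P = Submodule.span k (monom k '' {u | P u}) := by
  rw [wordsIn, MonoidAlgebra.supported_eq_span_single]
  rfl

theorem monom_mem_wordsIn {P : List X → Prop} {u : List X} (hu : P u) :
    monom k u ∈ wordsIn k P := by
  rw [wordsIn_eq_span]
  exact Submodule.subset_span ⟨u, hu, rfl⟩

theorem isLeadingWordR_iff {f : FreeAssocAlg k X} {u : List X} :
    IsLeadingWordR r f u ↔ coeffW f u ≠ 0 ∧ f ∈ wordsIn k (RLe r · u) := by
  rw [mem_wordsIn]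
  rfl

theorem _root_.IsLeadingWordR.unique (hwf : WellFounded r) {f : FreeAssocAlg k X} {u v : List X}
    (hu : IsLeadingWordR r f u) (hv : IsLeadingWordR r f v) : u = v :=
  (hv.2 u hu.1).resolve_right fun h => (hu.2 v hv.1).elim
    (fun e => hwf.asymmetric _ _ (e ▸ h) (e ▸ h)) fun h' => hwf.asymmetric _ _ h h'

theorem isLeadingWordR_monom (u : List X) : IsLeadingWordR r (monom k u) u :=
  ⟨by simp [coeffW_monom_self],
    fun v hv => Or.inl (by_contra fun h => hv (coeffW_monom_of_ne (Ne.symm h)))⟩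

theorem _root_.IsLeadingWordR.sandwich
    (hmono : ∀ u v a b : List X, r u v → r (a ++ u ++ b) (a ++ v ++ b))
    {f : FreeAssocAlg k X} {u : List X} (hu : IsLeadingWordR r f u) (a b : List X) :
    IsLeadingWordR r (monom k a * f * monom k b) (a ++ u ++ b) := by
  refine ⟨by rw [coeffW_sandwich]; exact hu.1, fun v hv => ?_⟩
  obtain ⟨t, rfl, ht⟩ := exists_of_coeffW_sandwich_ne_zero hv
  rcases hu.2 t ht with rfl | h
  exacts [Or.inl rfl, Or.inr (hmono _ _ _ _ h)]

theorem exists_isLeadingWordR (htrans : ∀ ⦃u v w : List X⦄, r u v → r v w → r u w)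
    (htri : ∀ u v : List X, r u v ∨ u = v ∨ r v u)
    {f : FreeAssocAlg k X} (hf : f ≠ 0) : ∃ u, IsLeadingWordR r f u := by
  classical
  have hs : (f.coeff.support.image FreeMonoid.toList).Nonempty :=
    (Finsupp.support_nonempty_iff.2 (mt MonoidAlgebra.coeff_eq_zero.1 hf)).image _
  obtain ⟨u, hu, hmax⟩ := exists_maximum htrans htri hs
  obtain ⟨m, hm, rfl⟩ := Finset.mem_image.1 hu
  exact ⟨m.toList, Finsupp.mem_support_iff.1 hm, fun v hv =>
    hmax v (Finset.mem_image.2 ⟨FreeMonoid.ofList v, Finsupp.mem_support_iff.2 hv, rfl⟩)⟩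

theorem exists_isLeadingWordR_lt (htrans : ∀ ⦃u v w : List X⦄, r u v → r v w → r u w)
    (htri : ∀ u v : List X, r u v ∨ u = v ∨ r v u) {f : FreeAssocAlg k X} {w : List X}
    (hfw : f ∈ wordsIn k (r · w)) (hf : f ≠ 0) : ∃ u, IsLeadingWordR r f u ∧ r u w := by
  obtain ⟨u, hu⟩ := exists_isLeadingWordR htrans htri hf
  exact ⟨u, hu, mem_wordsIn.1 hfw u hu.1⟩

theorem monom_mul_mul_monom_mem_wordsIn_lt
    (hmono : ∀ u v a b : List X, r u v → r (a ++ u ++ b) (a ++ v ++ b)) {q : FreeAssocAlg k X}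
    {u : List X} (hq : q ∈ wordsIn k (r · u)) (a b : List X) :
    monom k a * q * monom k b ∈ wordsIn k (r · (a ++ u ++ b)) := by
  refine mem_wordsIn.2 fun v hv => ?_
  obtain ⟨t, rfl, ht⟩ := exists_of_coeffW_sandwich_ne_zero hv
  exact hmono _ _ _ _ (mem_wordsIn.1 hq t ht)

theorem sub_smul_mem_wordsIn_lt {f T : FreeAssocAlg k X} {u : List X} (hf : IsLeadingWordR r f u)
    (hT : IsLeadingWordR r T u) (hTu : coeffW T u = 1) :
    f - coeffW f u • T ∈ wordsIn k (r · u) := by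
  refine mem_wordsIn.2 fun v hv => ?_
  rw [coeffW_sub, coeffW_smul] at hv
  rcases eq_or_ne v u with rfl | hvu
  · simp [hTu] at hv
  · have : coeffW f v ≠ 0 ∨ coeffW T v ≠ 0 := by
      by_contra! h
      simp [h] at hv
    rcases this with h | h
    exacts [(hf.2 v h).resolve_left hvu, (hT.2 v h).resolve_left hvu]

def IsMonicSet (r : List X → List X → Prop) (S : Set (FreeAssocAlg k X)) : Prop :=
  ∀ s ∈ S, ∃ u : List X, IsLeadingWordR r s u ∧ coeffW s u = 1

theorem IsMonicSet.coeffW_eq_one (hS : IsMonicSet r S) (hwf : WellFounded r)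
    {s : FreeAssocAlg k X} (hs : s ∈ S) {sb : List X} (hsb : IsLeadingWordR r s sb) :
    coeffW s sb = 1 := by
  obtain ⟨u, hu, h1⟩ := hS s hs
  rwa [hsb.unique hwf hu]

theorem IsMonicSet.sub_mem_wordsIn_lt (hS : IsMonicSet r S) (hwf : WellFounded r)
    {s : FreeAssocAlg k X} (hs : s ∈ S) {sb : List X} (hsb : IsLeadingWordR r s sb) :
    s - monom k sb ∈ wordsIn k (r · sb) := by
  simpa [hS.coeffW_eq_one hwf hs hsb] using
    sub_smul_mem_wordsIn_lt hsb (isLeadingWordR_monom sb) (coeffW_monom_self sb)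

def sandwiches (r : List X → List X → Prop) (S : Set (FreeAssocAlg k X)) (P : List X → Prop) :
    Set (FreeAssocAlg k X) :=
  {p | ∃ s ∈ S, ∃ a b sb : List X,
    IsLeadingWordR r s sb ∧ P (a ++ sb ++ b) ∧ p = monom k a * s * monom k b}

theorem sandwich_mem_span_sandwiches {P : List X → Prop} {s : FreeAssocAlg k X} (hs : s ∈ S)
    {sb : List X} (hsb : IsLeadingWordR r s sb) {a b : List X} (hP : P (a ++ sb ++ b)) :
    monom k a * s * monom k b ∈ Submodule.span k (sandwiches r S P) :=
  Submodule.subset_span ⟨s, hs, a, b, sb, hsb, hP, rfl⟩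

theorem mem_span_sandwiches_self {s : FreeAssocAlg k X} (hs : s ∈ S) {sb : List X}
    (hsb : IsLeadingWordR r s sb) : s ∈ Submodule.span k (sandwiches r S (· = sb)) := by
  simpa [monom_nil] using sandwich_mem_span_sandwiches (a := []) (b := []) hs hsb (by simp)

theorem span_sandwiches_mono {P Q : List X → Prop} (h : ∀ u, P u → Q u) :
    Submodule.span k (sandwiches r S P) ≤ Submodule.span k (sandwiches r S Q) :=
  Submodule.span_mono fun _ ⟨s, hs, a, b, sb, hsb, hP, hp⟩ => ⟨s, hs, a, b, sb, hsb, h _ hP, hp⟩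

theorem mul_mul_mem_span_sandwiches {P₁ P P₂ Q : List X → Prop} {q₁ p q₂ : FreeAssocAlg k X}
    (hq₁ : q₁ ∈ wordsIn k P₁) (hp : p ∈ Submodule.span k (sandwiches r S P))
    (hq₂ : q₂ ∈ wordsIn k P₂) (hQ : ∀ u v w, P₁ u → P v → P₂ w → Q (u ++ v ++ w)) :
    q₁ * p * q₂ ∈ Submodule.span k (sandwiches r S Q) := by
  rw [wordsIn_eq_span] at hq₁ hq₂
  have h := Submodule.mul_mem_mul (Submodule.mul_mem_mul hq₁ hp) hq₂
  rw [Submodule.span_mul_span, Submodule.span_mul_span] at h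
  refine Submodule.span_mono ?_ h
  rintro _ ⟨_, ⟨_, ⟨u, hu, rfl⟩, _, ⟨s, hs, a, b, sb, hsb, hP, rfl⟩, rfl⟩, _, ⟨v, hv, rfl⟩, rfl⟩
  refine ⟨s, hs, u ++ a, b ++ v, sb, hsb, ?_, ?_⟩
  · simpa only [List.append_assoc] using hQ u _ v hu hP hv
  · simp only [← monom_mul_monom, mul_assoc]

theorem span_sandwiches_le_wordsIn
    (hmono : ∀ u v a b : List X, r u v → r (a ++ u ++ b) (a ++ v ++ b)) {P : List X → Prop}
    (hP : ∀ u v, r u v → P v → P u) :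
    Submodule.span k (sandwiches r S P) ≤ wordsIn k P := by
  rw [Submodule.span_le]
  rintro _ ⟨s, -, a, b, sb, hsb, hw, rfl⟩
  refine mem_wordsIn.2 fun v hv => ?_
  rcases (hsb.sandwich hmono a b).2 v hv with rfl | h
  exacts [hw, hP _ _ h hw]

theorem trivialModAssR_iff {w : List X} {p : FreeAssocAlg k X} :
    TrivialModAssR r S w p ↔ p ∈ Submodule.span k (sandwiches r S (r · w)) := by
  rw [Submodule.mem_span_set']
  constructor
  · rintro ⟨n, α, s, a, b, sb, hmem, rfl⟩
    exact ⟨n, α, fun i =>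
      ⟨_, s i, (hmem i).1, a i, b i, sb i, (hmem i).2.1, (hmem i).2.2, rfl⟩, rfl⟩
  · rintro ⟨n, α, g, rfl⟩
    choose s hs a b sb hsb hw hg using fun i => (g i).2
    exact ⟨n, α, s, a, b, sb, fun i => ⟨hs i, hsb i, hw i⟩, by simp only [hg]⟩

theorem eq_zero_or_exists_mem_span_sandwiches_rle
    (htrans : ∀ ⦃u v w : List X⦄, r u v → r v w → r u w)
    (htri : ∀ u v : List X, r u v ∨ u = v ∨ r v u) {P : List X → Prop} {f : FreeAssocAlg k X}
    (hf : f ∈ Submodule.span k (sandwiches r S P)) :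
    f = 0 ∨ ∃ w, P w ∧ f ∈ Submodule.span k (sandwiches r S (RLe r · w)) := by
  induction hf using Submodule.span_induction with
  | mem _ hx =>
    obtain ⟨s, hs, a, b, sb, hsb, hP, rfl⟩ := hx
    exact Or.inr ⟨_, hP, sandwich_mem_span_sandwiches hs hsb (Or.inl rfl)⟩
  | zero => exact Or.inl rfl
  | add x y _ _ hx hy =>
    rcases hx with rfl | ⟨u, hPu, hx⟩
    · simpa using hy
    rcases hy with rfl | ⟨v, hPv, hy⟩
    · simpa using Or.inr ⟨u, hPu, hx⟩
    refine Or.inr ?_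
    rcases htri u v with h | rfl | h
    · exact ⟨v, hPv, add_mem (span_sandwiches_mono (fun _ ht => ht.trans htrans (Or.inr h)) hx) hy⟩
    · exact ⟨u, hPu, add_mem hx hy⟩
    · exact ⟨u, hPu, add_mem hx (span_sandwiches_mono (fun _ ht => ht.trans htrans (Or.inr h)) hy)⟩
  | smul c x _ hx =>
    rcases hx with rfl | ⟨u, hPu, hx⟩
    · simp
    · exact Or.inr ⟨u, hPu, Submodule.smul_mem _ c hx⟩

noncomputable abbrev idealSpan (S : Set (FreeAssocAlg k X)) : Submodule k (FreeAssocAlg k X) :=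
  Submodule.restrictScalars k (TwoSidedIdeal.asIdeal (TwoSidedIdeal.span S))

theorem mem_idealSpan {f : FreeAssocAlg k X} : f ∈ idealSpan S ↔ f ∈ TwoSidedIdeal.span S := by
  rw [Submodule.restrictScalars_mem, TwoSidedIdeal.mem_asIdeal]

theorem span_sandwiches_le_idealSpan (P : List X → Prop) :
    Submodule.span k (sandwiches r S P) ≤ idealSpan S := by
  rw [Submodule.span_le]
  rintro _ ⟨s, hs, a, b, -, -, -, rfl⟩
  exact mem_idealSpan.2 (TwoSidedIdeal.mul_mem_right _ _ _
    (TwoSidedIdeal.mul_mem_left _ _ _ (TwoSidedIdeal.subset_span hs)))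

theorem idealSpan_le_span_sandwiches (hS : ∀ s ∈ S, ∃ u, IsLeadingWordR r s u) :
    idealSpan S ≤ Submodule.span k (sandwiches r S fun _ => True) := by
  have htop : ∀ q : FreeAssocAlg k X, q ∈ wordsIn k fun _ => True :=
    fun _ => mem_wordsIn.2 fun _ _ => trivial
  intro f hf
  replace hf := mem_idealSpan.1 hf
  induction hf using TwoSidedIdeal.span_induction with
  | mem s hs =>
    obtain ⟨u, hu⟩ := hS s hs
    exact span_sandwiches_mono (fun _ _ => trivial) (mem_span_sandwiches_self hs hu)
  | zero => exact zero_mem _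
  | add _ _ _ _ hx hy => exact add_mem hx hy
  | neg _ _ hx => exact neg_mem hx
  | left_absorb a _ _ hx =>
    simpa using mul_mul_mem_span_sandwiches (htop a) hx (htop 1) fun _ _ _ _ _ _ => trivial
  | right_absorb b _ _ hx =>
    simpa using mul_mul_mem_span_sandwiches (htop 1) hx (htop b) fun _ _ _ _ _ _ => trivial

def IsIrreducibleWord (r : List X → List X → Prop) (S : Set (FreeAssocAlg k X)) (u : List X) :
    Prop :=
  ¬ ∃ (s : FreeAssocAlg k X) (a b sb : List X), s ∈ S ∧ IsLeadingWordR r s sb ∧ u = a ++ sb ++ b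

theorem exists_monic_mem_wordsIn_irreducible_sup (hr : IsMonomialOrder r) (hS : IsMonicSet r S)
    (u : List X) :
    ∃ T, IsLeadingWordR r T u ∧ coeffW T u = 1 ∧
      T ∈ wordsIn k (IsIrreducibleWord r S) ⊔ Submodule.span k (sandwiches r S (RLe r · u)) := by
  by_cases hu : IsIrreducibleWord r S u
  · exact ⟨monom k u, isLeadingWordR_monom u, coeffW_monom_self u,
      Submodule.mem_sup_left (monom_mem_wordsIn hu)⟩
  · obtain ⟨s, a, b, sb, hs, hsb, rfl⟩ := not_not.1 hu
    exact ⟨_, hsb.sandwich hr.append_mono a b,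
      by rw [coeffW_sandwich, hS.coeffW_eq_one hr.wf hs hsb],
      Submodule.mem_sup_right (sandwich_mem_span_sandwiches hs hsb (Or.inl rfl))⟩

theorem mem_wordsIn_irreducible_sup (hr : IsMonomialOrder r) (hS : IsMonicSet r S) (u : List X)
    {f : FreeAssocAlg k X} (hf : IsLeadingWordR r f u) :
    f ∈ wordsIn k (IsIrreducibleWord r S) ⊔ Submodule.span k (sandwiches r S (RLe r · u)) := by
  induction u using hr.wf.induction generalizing f with
  | _ u ih =>
  obtain ⟨T, hT, hTu, hTmem⟩ := exists_monic_mem_wordsIn_irreducible_sup hr hS u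
  have hlt := sub_smul_mem_wordsIn_lt hf hT hTu
  rw [← add_sub_cancel (coeffW f u • T) f]
  refine add_mem (Submodule.smul_mem _ _ hTmem) ?_
  rcases eq_or_ne (f - coeffW f u • T) 0 with h0 | hne
  · rw [h0]
    exact zero_mem _
  · obtain ⟨v, hv, hvu⟩ := exists_isLeadingWordR_lt hr.trans hr.trichotomous hlt hne
    refine SetLike.le_def.1 (sup_le_sup_left (span_sandwiches_mono fun _ ht => ?_) _) (ih v hvu hv)
    exact Or.inr (RLe.trans_lt hr.trans ht hvu)

theorem sup_wordsIn_irreducible_eq_top (hr : IsMonomialOrder r) (hS : IsMonicSet r S) :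
    idealSpan S ⊔ wordsIn k (IsIrreducibleWord r S) = ⊤ := by
  refine eq_top_iff.2 fun f _ => ?_
  rcases eq_or_ne f 0 with rfl | hf
  · exact zero_mem _
  obtain ⟨u, hu⟩ := exists_isLeadingWordR hr.trans hr.trichotomous hf
  rw [sup_comm]
  exact SetLike.le_def.1 (sup_le_sup_left (span_sandwiches_le_idealSpan _) _)
    (mem_wordsIn_irreducible_sup hr hS u hu)

theorem exists_eq_append_of_append_eq_append {x y x' y' : List X} (h : x ++ y = x' ++ y')
    (hl : x.length ≤ x'.length) : ∃ c, x' = x ++ c ∧ y = c ++ y' := by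
  obtain ⟨c, rfl⟩ := List.prefix_of_prefix_length_le ⟨y, rfl⟩ ⟨y', h.symm⟩ hl
  exact ⟨c, rfl, List.append_cancel_left (h.trans (List.append_assoc _ _ _))⟩

/-- Two occurrences of subwords in one word, the first starting no later: they are disjoint, they
overlap (an intersection composition), or the second lies inside the first (an inclusion). -/
theorem occurrences_cases {a₁ u₁ b₁ a₂ u₂ b₂ : List X} (h : a₁ ++ u₁ ++ b₁ = a₂ ++ u₂ ++ b₂)
    (hl : a₁.length ≤ a₂.length) :
    (∃ e, a₂ = a₁ ++ u₁ ++ e ∧ b₁ = e ++ u₂ ++ b₂) ∨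
    (∃ c e, a₂ = a₁ ++ c ∧ b₁ = e ++ b₂ ∧ u₁ ++ e = c ++ u₂ ∧
      (u₁ ++ e).length < u₁.length + u₂.length) ∨
    (∃ c e, a₂ = a₁ ++ c ∧ b₂ = e ++ b₁ ∧ u₁ = c ++ u₂ ++ e) := by
  simp only [List.append_assoc] at h
  obtain ⟨c, rfl, hc⟩ := exists_eq_append_of_append_eq_append h hl
  rcases le_or_gt u₁.length c.length with h₁ | h₁
  · obtain ⟨e, rfl, he⟩ := exists_eq_append_of_append_eq_append hc h₁
    exact Or.inl ⟨e, by simp, by simp [he]⟩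
  obtain ⟨d, rfl, hd⟩ := exists_eq_append_of_append_eq_append hc.symm h₁.le
  rcases le_or_gt d.length u₂.length with h₂ | h₂
  · obtain ⟨e, rfl, he⟩ := exists_eq_append_of_append_eq_append hd.symm h₂
    refine Or.inr (Or.inl ⟨c, e, rfl, he, by simp, ?_⟩)
    simp only [List.length_append] at h₁ ⊢
    omega
  · obtain ⟨e, rfl, he⟩ := exists_eq_append_of_append_eq_append hd h₂.le
    exact Or.inr (Or.inr ⟨c, e, rfl, he, by simp⟩)

theorem sandwich_sub_sandwich_mem_of_disjoint (hr : IsMonomialOrder r) (hS : IsMonicSet r S)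
    {s₁ s₂ : FreeAssocAlg k X} (hs₁ : s₁ ∈ S) (hs₂ : s₂ ∈ S) {sb₁ sb₂ : List X}
    (h₁ : IsLeadingWordR r s₁ sb₁) (h₂ : IsLeadingWordR r s₂ sb₂) (a e b : List X) :
    monom k a * s₁ * monom k (e ++ sb₂ ++ b) - monom k (a ++ sb₁ ++ e) * s₂ * monom k b ∈
      Submodule.span k (sandwiches r S (r · (a ++ sb₁ ++ e ++ sb₂ ++ b))) := by
  -- Both terms are `a s₁ e s₂ b` with one factor replaced by its leading word; the
  -- corrections `s - s̄` only contribute lower words.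
  have key : monom k a * s₁ * monom k (e ++ sb₂ ++ b) - monom k (a ++ sb₁ ++ e) * s₂ * monom k b =
      monom k a * (s₁ - monom k sb₁) * monom k e * s₂ * monom k b -
        monom k a * s₁ * (monom k e * (s₂ - monom k sb₂) * monom k b) := by
    simp only [← monom_mul_monom]
    noncomm_ring
  rw [key]
  refine sub_mem (mul_mul_mem_span_sandwiches
      (monom_mul_mul_monom_mem_wordsIn_lt hr.append_mono (hS.sub_mem_wordsIn_lt hr.wf hs₁ h₁) a e)
      (mem_span_sandwiches_self hs₂ h₂) (monom_mem_wordsIn (P := (· = b)) rfl) ?_)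
    (mul_mul_mem_span_sandwiches (monom_mem_wordsIn (P := (· = a)) rfl)
      (mem_span_sandwiches_self hs₁ h₁)
      (monom_mul_mul_monom_mem_wordsIn_lt hr.append_mono
        (hS.sub_mem_wordsIn_lt hr.wf hs₂ h₂) e b) ?_)
  · intro u v w hu hv hw
    rw [hv, hw]
    simpa using hr.append_mono _ _ [] (sb₂ ++ b) hu
  · intro u v w hu hv hw
    rw [hu, hv]
    simpa using hr.append_mono _ _ (a ++ sb₁) [] hw

theorem _root_.IsGSBAssR.sandwich_mem_of_isAssComp (hGSB : IsGSBAssR r S)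
    (hmono : ∀ u v a b : List X, r u v → r (a ++ u ++ b) (a ++ v ++ b))
    {s₁ s₂ : FreeAssocAlg k X} (hs₁ : s₁ ∈ S) (hs₂ : s₂ ∈ S) {sb₁ sb₂ w : List X}
    (h₁ : IsLeadingWordR r s₁ sb₁) (h₂ : IsLeadingWordR r s₂ sb₂) {sh : CompShape X}
    {p : FreeAssocAlg k X} (hp : IsAssComp s₁ s₂ sb₁ sb₂ w sh p) (a b : List X) :
    monom k a * p * monom k b ∈ Submodule.span k (sandwiches r S (r · (a ++ w ++ b))) :=
  mul_mul_mem_span_sandwiches (monom_mem_wordsIn rfl)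
    (trivialModAssR_iff.1 (hGSB _ _ _ _ _ _ _ hs₁ hs₂ h₁ h₂ hp)) (monom_mem_wordsIn rfl)
    fun _ _ _ hu hv hw => hu ▸ hw ▸ hmono _ _ _ _ hv

theorem _root_.IsGSBAssR.sandwich_sub_sandwich_mem (hGSB : IsGSBAssR r S)
    (hr : IsMonomialOrder r) (hS : IsMonicSet r S) {s₁ s₂ : FreeAssocAlg k X} (hs₁ : s₁ ∈ S)
    (hs₂ : s₂ ∈ S) {sb₁ sb₂ : List X} (h₁ : IsLeadingWordR r s₁ sb₁)
    (h₂ : IsLeadingWordR r s₂ sb₂) {a₁ b₁ a₂ b₂ : List X}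
    (hw : a₁ ++ sb₁ ++ b₁ = a₂ ++ sb₂ ++ b₂) :
    monom k a₁ * s₁ * monom k b₁ - monom k a₂ * s₂ * monom k b₂ ∈
      Submodule.span k (sandwiches r S (r · (a₁ ++ sb₁ ++ b₁))) := by
  wlog hl : a₁.length ≤ a₂.length generalizing s₁ s₂ sb₁ sb₂ a₁ b₁ a₂ b₂
  · rw [hw, ← neg_sub]
    exact neg_mem (this hs₂ hs₁ h₂ h₁ hw.symm (by omega))
  rcases occurrences_cases hw hl with
    ⟨e, rfl, rfl⟩ | ⟨c, e, rfl, rfl, hce, hlen⟩ | ⟨c, e, rfl, rfl, rfl⟩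
  · simpa only [List.append_assoc] using
      sandwich_sub_sandwich_mem_of_disjoint hr hS hs₁ hs₂ h₁ h₂ a₁ e b₂
  · have hp : IsAssComp s₁ s₂ sb₁ sb₂ (sb₁ ++ e) (.inter c e)
        (s₁ * monom k e - monom k c * s₂) := ⟨rfl, hce, hlen, rfl⟩
    have key : monom k a₁ * s₁ * monom k (e ++ b₂) - monom k (a₁ ++ c) * s₂ * monom k b₂ =
        monom k a₁ * (s₁ * monom k e - monom k c * s₂) * monom k b₂ := by
      simp only [← monom_mul_monom]
      noncomm_ring
    rw [key]
    simpa only [List.append_assoc] using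
      hGSB.sandwich_mem_of_isAssComp hr.append_mono hs₁ hs₂ h₁ h₂ hp a₁ b₂
  · have hp : IsAssComp s₁ s₂ (c ++ sb₂ ++ e) sb₂ (c ++ sb₂ ++ e) (.incl c e)
        (s₁ - monom k c * s₂ * monom k e) := ⟨rfl, rfl, rfl⟩
    have key : monom k a₁ * s₁ * monom k b₁ - monom k (a₁ ++ c) * s₂ * monom k (e ++ b₁) =
        monom k a₁ * (s₁ - monom k c * s₂ * monom k e) * monom k b₁ := by
      simp only [← monom_mul_monom]
      noncomm_ring
    rw [key]
    exact hGSB.sandwich_mem_of_isAssComp hr.append_mono hs₁ hs₂ h₁ h₂ hp a₁ b₁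

theorem _root_.IsGSBAssR.span_sandwiches_rle_le (hGSB : IsGSBAssR r S) (hr : IsMonomialOrder r)
    (hS : IsMonicSet r S) {s₀ : FreeAssocAlg k X} (hs₀ : s₀ ∈ S) {sb₀ : List X}
    (h₀ : IsLeadingWordR r s₀ sb₀) (a₀ b₀ : List X) :
    Submodule.span k (sandwiches r S (RLe r · (a₀ ++ sb₀ ++ b₀))) ≤
      (k ∙ (monom k a₀ * s₀ * monom k b₀)) ⊔
        Submodule.span k (sandwiches r S (r · (a₀ ++ sb₀ ++ b₀))) := by
  rw [Submodule.span_le]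
  rintro _ ⟨s, hs, a, b, sb, hsb, hw | hw, rfl⟩
  · rw [SetLike.mem_coe,
      ← sub_sub_cancel (monom k a₀ * s₀ * monom k b₀) (monom k a * s * monom k b)]
    exact sub_mem (Submodule.mem_sup_left (Submodule.mem_span_singleton_self _))
      (Submodule.mem_sup_right (hGSB.sandwich_sub_sandwich_mem hr hS hs₀ hs h₀ hsb hw.symm))
  · exact Submodule.mem_sup_right (sandwich_mem_span_sandwiches hs hsb hw)

theorem _root_.IsGSBAssR.mem_span_sandwiches_lt_or_isLeadingWordR (hGSB : IsGSBAssR r S)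
    (hr : IsMonomialOrder r) (hS : IsMonicSet r S) {w : List X} {f : FreeAssocAlg k X}
    (hf : f ∈ Submodule.span k (sandwiches r S (RLe r · w))) :
    f ∈ Submodule.span k (sandwiches r S (r · w)) ∨
      (IsLeadingWordR r f w ∧ ¬ IsIrreducibleWord r S w) := by
  by_cases hw : IsIrreducibleWord r S w
  · refine Or.inl (Submodule.span_mono ?_ hf)
    rintro _ ⟨s, hs, a, b, sb, hsb, rfl | hlt, rfl⟩
    · exact absurd ⟨s, a, b, sb, hs, hsb, rfl⟩ hw
    · exact ⟨s, hs, a, b, sb, hsb, hlt, rfl⟩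
  obtain ⟨s₀, a₀, b₀, sb₀, hs₀, h₀, rfl⟩ := not_not.1 hw
  obtain ⟨_, hc, h, hh, rfl⟩ :=
    Submodule.mem_sup.1 (hGSB.span_sandwiches_rle_le hr hS hs₀ h₀ a₀ b₀ hf)
  obtain ⟨c, rfl⟩ := Submodule.mem_span_singleton.1 hc
  rcases eq_or_ne c 0 with rfl | hc0
  · simpa using Or.inl hh
  have hh0 : coeffW h (a₀ ++ sb₀ ++ b₀) = 0 := by
    by_contra hne
    have hlt := mem_wordsIn.1
      (span_sandwiches_le_wordsIn hr.append_mono (fun _ _ huv hv => hr.trans huv hv) hh) _ hne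
    exact hr.wf.asymmetric _ _ hlt hlt
  refine Or.inr ⟨isLeadingWordR_iff.2 ⟨?_, span_sandwiches_le_wordsIn hr.append_mono
    (fun _ _ huv hv => Or.inr (lt_of_lt_of_rle hr.trans huv hv)) hf⟩, hw⟩
  rw [coeffW_add, coeffW_smul, coeffW_sandwich, hS.coeffW_eq_one hr.wf hs₀ h₀, hh0]
  simpa using hc0

def LeadingWordsReducible (r : List X → List X → Prop) (S : Set (FreeAssocAlg k X)) : Prop :=
  ∀ f : FreeAssocAlg k X, f ∈ TwoSidedIdeal.span S → f ≠ 0 →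
    ∀ fb : List X, IsLeadingWordR r f fb →
      ∃ s ∈ S, ∃ a b sb : List X, IsLeadingWordR r s sb ∧ fb = a ++ sb ++ b

theorem _root_.IsGSBAssR.leadingWordsReducible (hGSB : IsGSBAssR r S) (hr : IsMonomialOrder r)
    (hS : IsMonicSet r S) : LeadingWordsReducible r S := by
  intro f hf hf0 fb hfb
  have hbound : ∀ {P : List X → Prop}, f ∈ Submodule.span k (sandwiches r S P) →
      ∃ w, P w ∧ f ∈ Submodule.span k (sandwiches r S (RLe r · w)) := fun hP =>
    (eq_zero_or_exists_mem_span_sandwiches_rle hr.trans hr.trichotomous hP).resolve_left hf0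
  have hS' : ∀ s ∈ S, ∃ u, IsLeadingWordR r s u := fun s hs => (hS s hs).imp fun _ => And.left
  obtain ⟨w, hw, hmin⟩ := hr.wf.has_min {w | f ∈ Submodule.span k (sandwiches r S (RLe r · w))}
    ((hbound (idealSpan_le_span_sandwiches hS' (mem_idealSpan.2 hf))).imp fun _ => And.right)
  rcases hGSB.mem_span_sandwiches_lt_or_isLeadingWordR hr hS hw with hlt | ⟨hlw, hred⟩
  · obtain ⟨v, hvw, hv⟩ := hbound hlt
    exact absurd hvw (hmin v hv)
  · obtain ⟨s, a, b, sb, hs, hsb, hwe⟩ := not_not.1 hred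
    exact ⟨s, hs, a, b, sb, hsb, (hfb.unique hr.wf hlw).trans hwe⟩

theorem sandwich_sub_sandwich_mem_wordsIn_lt (hr : IsMonomialOrder r) (hS : IsMonicSet r S)
    {s₁ s₂ : FreeAssocAlg k X} (hs₁ : s₁ ∈ S) (hs₂ : s₂ ∈ S) {sb₁ sb₂ : List X}
    (h₁ : IsLeadingWordR r s₁ sb₁) (h₂ : IsLeadingWordR r s₂ sb₂) {a₁ b₁ a₂ b₂ : List X}
    (hw : a₁ ++ sb₁ ++ b₁ = a₂ ++ sb₂ ++ b₂) :
    monom k a₁ * s₁ * monom k b₁ - monom k a₂ * s₂ * monom k b₂ ∈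
      wordsIn k (r · (a₁ ++ sb₁ ++ b₁)) := by
  have hT₂ := h₂.sandwich hr.append_mono a₂ b₂
  rw [← hw] at hT₂
  have h := sub_smul_mem_wordsIn_lt (h₁.sandwich hr.append_mono a₁ b₁) hT₂
    (by rw [hw, coeffW_sandwich, hS.coeffW_eq_one hr.wf hs₂ h₂])
  rwa [coeffW_sandwich, hS.coeffW_eq_one hr.wf hs₁ h₁, one_smul] at h

theorem _root_.IsAssComp.mem_idealSpan_and_wordsIn_lt (hr : IsMonomialOrder r)
    (hS : IsMonicSet r S) {f g : FreeAssocAlg k X} (hf : f ∈ S) (hg : g ∈ S) {fb gb w : List X}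
    (hfb : IsLeadingWordR r f fb) (hgb : IsLeadingWordR r g gb) {sh : CompShape X}
    {p : FreeAssocAlg k X} (hp : IsAssComp f g fb gb w sh p) :
    p ∈ idealSpan S ∧ p ∈ wordsIn k (r · w) := by
  obtain ⟨a₁, b₁, a₂, b₂, rfl, hw, rfl⟩ : ∃ a₁ b₁ a₂ b₂ : List X, w = a₁ ++ fb ++ b₁ ∧
      a₁ ++ fb ++ b₁ = a₂ ++ gb ++ b₂ ∧
      p = monom k a₁ * f * monom k b₁ - monom k a₂ * g * monom k b₂ := by
    cases sh with
    | incl a b =>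
      obtain ⟨h₁, h₂, rfl⟩ := hp
      exact ⟨[], [], a, b, by simpa using h₁, by simpa [← h₁] using h₂, by simp [monom_nil]⟩
    | inter a b =>
      obtain ⟨h₁, h₂, -, rfl⟩ := hp
      exact ⟨[], b, a, [], by simpa using h₁, by simpa [← h₁] using h₂, by simp [monom_nil]⟩
  have hI := span_sandwiches_le_idealSpan (S := S) (r := r) (k := k) fun _ => True
  exact ⟨sub_mem (hI (sandwich_mem_span_sandwiches hf hfb trivial))
    (hI (sandwich_mem_span_sandwiches hg hgb trivial)),
    sandwich_sub_sandwich_mem_wordsIn_lt hr hS hf hg hfb hgb hw⟩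

theorem disjoint_of_leadingWordsReducible (htrans : ∀ ⦃u v w : List X⦄, r u v → r v w → r u w)
    (htri : ∀ u v : List X, r u v ∨ u = v ∨ r v u) (h : LeadingWordsReducible r S) :
    Disjoint (wordsIn k (IsIrreducibleWord r S)) (idealSpan S) := by
  refine Submodule.disjoint_def.2 fun f hirr hI => by_contra fun hf0 => ?_
  obtain ⟨u, hu⟩ := exists_isLeadingWordR htrans htri hf0
  obtain ⟨s, hs, a, b, sb, hsb, rfl⟩ := h f (mem_idealSpan.1 hI) hf0 u hu
  exact mem_wordsIn.1 hirr _ hu.1 ⟨s, a, b, sb, hs, hsb, rfl⟩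

theorem isGSBAssR_of_disjoint (hr : IsMonomialOrder r) (hS : IsMonicSet r S)
    (h : Disjoint (wordsIn k (IsIrreducibleWord r S)) (idealSpan S)) : IsGSBAssR r S := by
  intro f g fb gb w sh p hf hg hfb hgb hp
  rw [trivialModAssR_iff]
  obtain ⟨hpI, hpw⟩ := IsAssComp.mem_idealSpan_and_wordsIn_lt hr hS hf hg hfb hgb hp
  rcases eq_or_ne p 0 with rfl | hp0
  · exact zero_mem _
  obtain ⟨u, hu, huw⟩ := exists_isLeadingWordR_lt hr.trans hr.trichotomous hpw hp0
  obtain ⟨q, hq, t, ht, rfl⟩ := Submodule.mem_sup.1 (mem_wordsIn_irreducible_sup hr hS u hu)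
  obtain rfl : q = 0 := Submodule.disjoint_def.1 h q hq
    (by simpa using sub_mem hpI (span_sandwiches_le_idealSpan _ ht))
  simpa using span_sandwiches_mono (fun v hv => RLe.trans_lt hr.trans hv huw) ht

theorem span_range_monom (P : List X → Prop) :
    Submodule.span k (Set.range fun u : {u // P u} => monom k u.val) = wordsIn k P := by
  rw [wordsIn_eq_span, Set.image_eq_range]
  rfl

theorem exists_basis_of_disjoint (hr : IsMonomialOrder r) (hS : IsMonicSet r S)
    (h : Disjoint (wordsIn k (IsIrreducibleWord r S)) (idealSpan S)) :
    ∃ bas : Module.Basis {u // IsIrreducibleWord r S u} k (FreeAssocAlg k X ⧸ idealSpan S),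
      ∀ u, bas u = Submodule.Quotient.mk (monom k u.val) := by
  have hmonom : LinearIndependent k fun u : {u // IsIrreducibleWord r S u} => monom k u.val :=
    (MonoidAlgebra.basis (FreeMonoid X) k).linearIndependent.comp _
      (FreeMonoid.ofList.injective.comp Subtype.val_injective)
  have hli : LinearIndependent k ((idealSpan S).mkQ ∘ fun u : {u // IsIrreducibleWord r S u} =>
      monom k u.val) :=
    hmonom.map (by rwa [span_range_monom, Submodule.ker_mkQ])
  have hsp : ⊤ ≤ Submodule.span k (Set.range ((idealSpan S).mkQ ∘
      fun u : {u // IsIrreducibleWord r S u} => monom k u.val)) := by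
    rw [Set.range_comp, Submodule.span_image, span_range_monom,
      (Submodule.map_mkQ_eq_top _ _).2 (sup_wordsIn_irreducible_eq_top hr hS)]
  exact ⟨Module.Basis.mk hli hsp, fun u => Module.Basis.mk_apply hli hsp u⟩

theorem disjoint_of_basis
    (bas : Module.Basis {u // IsIrreducibleWord r S u} k (FreeAssocAlg k X ⧸ idealSpan S))
    (hbas : ∀ u, bas u = Submodule.Quotient.mk (monom k u.val)) :
    Disjoint (wordsIn k (IsIrreducibleWord r S)) (idealSpan S) := by
  have hli : LinearIndependent k ((idealSpan S).mkQ ∘ fun u : {u // IsIrreducibleWord r S u} =>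
      monom k u.val) := by
    convert bas.linearIndependent
    exact funext fun u => (hbas u).symm
  simpa only [span_range_monom, Submodule.ker_mkQ] using Submodule.range_ker_disjoint hli

end CompositionDiamond

open CompositionDiamond

theorem composition_diamond_assoc_general {k X : Type*} [Field k]
    (r : List X → List X → Prop)
    (hwf : WellFounded r) (htrans : Transitive r)
    (htri : ∀ u v : List X, r u v ∨ u = v ∨ r v u)
    (hmono : ∀ u v a b : List X, r u v → r (a ++ u ++ b) (a ++ v ++ b))
    (S : Set (FreeAssocAlg k X))
    (hmonic : ∀ s ∈ S, ∃ u : List X, IsLeadingWordR r s u ∧ coeffW s u = 1) :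
    (IsGSBAssR r S ↔
      ∀ f : FreeAssocAlg k X, f ∈ TwoSidedIdeal.span S → f ≠ 0 →
        ∀ fb : List X, IsLeadingWordR r f fb →
          ∃ s ∈ S, ∃ a b sb : List X, IsLeadingWordR r s sb ∧ fb = a ++ sb ++ b) ∧
    ((∀ f : FreeAssocAlg k X, f ∈ TwoSidedIdeal.span S → f ≠ 0 →
        ∀ fb : List X, IsLeadingWordR r f fb →
          ∃ s ∈ S, ∃ a b sb : List X, IsLeadingWordR r s sb ∧ fb = a ++ sb ++ b) ↔
      ∃ bas : Module.Basis
          {u : List X // ¬ ∃ (s : FreeAssocAlg k X) (a b sb : List X),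
            s ∈ S ∧ IsLeadingWordR r s sb ∧ u = a ++ sb ++ b} k
          (FreeAssocAlg k X ⧸ Submodule.restrictScalars k
            (TwoSidedIdeal.asIdeal (TwoSidedIdeal.span S))),
        ∀ u, bas u = Submodule.Quotient.mk (monom k u.val)) := by
  have hr : IsMonomialOrder r := ⟨hwf, htrans, htri, hmono⟩
  have hdisj : LeadingWordsReducible r S →
      Disjoint (wordsIn k (IsIrreducibleWord r S)) (idealSpan S) :=
    disjoint_of_leadingWordsReducible htrans htri
  refine ⟨⟨fun h => h.leadingWordsReducible hr hmonic,
      fun h => isGSBAssR_of_disjoint hr hmonic (hdisj h)⟩,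
    ⟨fun h => exists_basis_of_disjoint hr hmonic (hdisj h), ?_⟩⟩
  rintro ⟨bas, hbas⟩
  exact (isGSBAssR_of_disjoint hr hmonic (disjoint_of_basis bas hbas)).leadingWordsReducible
    hr hmonic

/-- Composition–Diamond lemma for associative algebras;
Shirshov, Bokut, Bergman.  For a nonempty set `S` of monic polynomials in
`k⟨X⟩` and a monomial well-order `<` (here `r u v` means `u < v`), `S` is a
Gröbner–Shirshov basis iff the leading word of every nonzero element of the
two-sided ideal `Id(S)` has the form `a s̄ b`; and either condition is
equivalent to the `S`-irreducible words forming a `k`-basis of `k⟨X⟩/Id(S)`. -/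
theorem composition_diamond_assoc {k X : Type*} [Field k]
    (r : List X → List X → Prop)
    (hwf : WellFounded r) (htrans : Transitive r)
    (htri : ∀ u v : List X, r u v ∨ u = v ∨ r v u)
    (hmono : ∀ u v a b : List X, r u v → r (a ++ u ++ b) (a ++ v ++ b))
    (S : Set (FreeAssocAlg k X)) (hne : S.Nonempty)
    (hmonic : ∀ s ∈ S, ∃ u : List X, IsLeadingWordR r s u ∧ coeffW s u = 1) :
    (IsGSBAssR r S ↔
      ∀ f : FreeAssocAlg k X, f ∈ TwoSidedIdeal.span S → f ≠ 0 →
        ∀ fb : List X, IsLeadingWordR r f fb →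
          ∃ s ∈ S, ∃ a b sb : List X, IsLeadingWordR r s sb ∧ fb = a ++ sb ++ b) ∧
    ((∀ f : FreeAssocAlg k X, f ∈ TwoSidedIdeal.span S → f ≠ 0 →
        ∀ fb : List X, IsLeadingWordR r f fb →
          ∃ s ∈ S, ∃ a b sb : List X, IsLeadingWordR r s sb ∧ fb = a ++ sb ++ b) ↔
      ∃ bas : Module.Basis
          {u : List X // ¬ ∃ (s : FreeAssocAlg k X) (a b sb : List X),
            s ∈ S ∧ IsLeadingWordR r s sb ∧ u = a ++ sb ++ b} k
          (FreeAssocAlg k X ⧸ Submodule.restrictScalars k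
            (TwoSidedIdeal.asIdeal (TwoSidedIdeal.span S))),
        ∀ u, bas u = Submodule.Quotient.mk (monom k u.val)) :=
  composition_diamond_assoc_general r hwf htrans htri hmono S hmonic
end
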